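/- Let (X,η) be a field configuration of the Poisson sigma model defined on all of ℝ², satisfying both equations of motion (E1) and (E2), and suppose X and η are ℤ²-periodic: X(u + k) = X(u) and η(u + k) = η(u) for all u ∈ ℝ² and k ∈ ℤ² (so (X,η) is a solution on the torus). Then for every smooth vector field A : ℝⁿ → ℝⁿ, the integral over the unit square of the contraction of the Schouten bracket of α with A vanishes: ∫_{[0,1]²} Σ_{μ,ν,λ} ( α^{λν} ∂_λ A^μ − α^{λμ} ∂_λ A^ν − A^λ ∂_λ α^{μν} )(X(u)) · η_{μ1}(u) η_{ν2}(u) du = 0. (Thus the pairing ⟨B, (Σ, X̂)⟩ = ∫_Σ B^{μν} η_μ∧η_ν of bivectors with closed solutions vanishes on Schouten-exact bivectors, i.e., it descends to Lichnerowicz–Poisson cohomology.) -/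

import Mathlib

open MeasureTheory

noncomputable def pd (i : Fin 2) (g : ℝ × ℝ → ℝ) (p : ℝ × ℝ) : ℝ :=
  fderiv ℝ g p (if i = 0 then ((1 : ℝ), (0 : ℝ)) else ((0 : ℝ), (1 : ℝ)))

noncomputable def pdn {n : ℕ} (lam : Fin n) (g : (Fin n → ℝ) → ℝ) (x : Fin n → ℝ) : ℝ :=
  fderiv ℝ g x (Pi.single lam 1)

noncomputable def Lag {n : ℕ} (α : (Fin n → ℝ) → Fin n → Fin n → ℝ)
    (X : ℝ × ℝ → Fin n → ℝ) (η : ℝ × ℝ → Fin n → Fin 2 → ℝ) (p : ℝ × ℝ) : ℝ :=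
  (∑ μ, (η p μ 0 * pd 1 (fun q => X q μ) p - η p μ 1 * pd 0 (fun q => X q μ) p))
    + ∑ μ, ∑ ν, α (X p) μ ν * η p μ 0 * η p ν 1

/- ## Auxiliary lemmas -/

lemma perm_132 {n : ℕ} {u v : Fin n → Fin n → Fin n → ℝ} (h : ∀ x y z, u x y z = v x z y) :
    ∑ x, ∑ y, ∑ z, u x y z = ∑ x, ∑ y, ∑ z, v x y z := by
  refine Finset.sum_congr rfl fun x _ => ?_
  rw [show (∑ y, ∑ z, u x y z) = ∑ y, ∑ z, v x z y from
    Finset.sum_congr rfl fun y _ => Finset.sum_congr rfl fun z _ => h x y z]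
  exact Finset.sum_comm

lemma perm_213 {n : ℕ} {u v : Fin n → Fin n → Fin n → ℝ} (h : ∀ x y z, u x y z = v y x z) :
    ∑ x, ∑ y, ∑ z, u x y z = ∑ x, ∑ y, ∑ z, v x y z := by
  rw [show (∑ x, ∑ y, ∑ z, u x y z) = ∑ x, ∑ y, ∑ z, v y x z from
    Finset.sum_congr rfl fun x _ => Finset.sum_congr rfl fun y _ =>
      Finset.sum_congr rfl fun z _ => h x y z]
  exact Finset.sum_comm

lemma perm_231 {n : ℕ} {u v : Fin n → Fin n → Fin n → ℝ} (h : ∀ x y z, u x y z = v y z x) :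
    ∑ x, ∑ y, ∑ z, u x y z = ∑ x, ∑ y, ∑ z, v x y z := by
  refine perm_213 (v := fun x y z => v x z y) ?_ |>.trans (perm_132 fun x y z => rfl)
  exact fun x y z => h x y z

lemma perm_312 {n : ℕ} {u v : Fin n → Fin n → Fin n → ℝ} (h : ∀ x y z, u x y z = v z x y) :
    ∑ x, ∑ y, ∑ z, u x y z = ∑ x, ∑ y, ∑ z, v x y z := by
  refine perm_132 (v := fun x y z => v y x z) ?_ |>.trans (perm_213 fun x y z => rfl)
  exact fun x y z => h x y z

lemma alg {n : ℕ} (a d : Fin n → Fin n → ℝ) (c : Fin n → ℝ)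
    (P : Fin n → Fin n → Fin n → ℝ) (h k w : Fin n → ℝ) :
    (∑ μ, ∑ ν, (∑ l, (a l ν * d l μ - a l μ * d l ν - c l * P l μ ν)) * h μ * k ν)
      = (∑ μ, ((∑ l, d l μ * (-∑ ν, a l ν * h ν)) * k μ
              + c μ * (w μ - ∑ μ', ∑ ν, P μ μ' ν * h μ' * k ν)))
        - ∑ μ, ((∑ l, d l μ * (-∑ ν, a l ν * k ν)) * h μ + c μ * w μ) := by
  simp only [sub_mul, Finset.sum_sub_distrib, Finset.sum_mul, Finset.mul_sum,
    mul_neg, neg_mul, Finset.sum_neg_distrib, mul_sub, Finset.sum_add_distrib, add_mul,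
    sub_neg_eq_add]
  ring_nf
  have h1 : (∑ x : Fin n, ∑ y : Fin n, ∑ z : Fin n, a z y * d z x * h x * k y)
      = ∑ x : Fin n, ∑ y : Fin n, ∑ z : Fin n, d y x * a y z * k z * h x :=
    perm_132 fun x y z => by ring
  have h2 : (∑ x : Fin n, ∑ y : Fin n, ∑ z : Fin n, a z x * d z y * h x * k y)
      = ∑ x : Fin n, ∑ y : Fin n, ∑ z : Fin n, d y x * a y z * h z * k x :=
    perm_231 fun x y z => by ring
  have h3 : (∑ x : Fin n, ∑ y : Fin n, ∑ z : Fin n, c z * P z x y * h x * k y)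
      = ∑ x : Fin n, ∑ y : Fin n, ∑ z : Fin n, c x * P x y z * h y * k z :=
    perm_312 fun x y z => by ring
  linarith [h1, h2, h3]

lemma pd_sum {n : ℕ} (i : Fin 2) (f : Fin n → ℝ × ℝ → ℝ) (p : ℝ × ℝ)
    (hf : ∀ μ, DifferentiableAt ℝ (f μ) p) :
    pd i (fun q => ∑ μ, f μ q) p = ∑ μ, pd i (f μ) p := by
  unfold pd
  rw [fderiv_fun_sum (fun μ _ => hf μ)]
  simp

lemma pd_mul (i : Fin 2) (a b : ℝ × ℝ → ℝ) (p : ℝ × ℝ)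
    (ha : DifferentiableAt ℝ a p) (hb : DifferentiableAt ℝ b p) :
    pd i (fun q => a q * b q) p = pd i a p * b p + a p * pd i b p := by
  unfold pd
  rw [fderiv_fun_mul ha hb]
  simp [mul_comm]
  ring

lemma pd_comp {n : ℕ} (i : Fin 2) (F : (Fin n → ℝ) → ℝ) (X : ℝ × ℝ → Fin n → ℝ) (p : ℝ × ℝ)
    (hF : DifferentiableAt ℝ F (X p)) (hX : DifferentiableAt ℝ X p) :
    pd i (fun q => F (X q)) p = ∑ l, pdn l F (X p) * pd i (fun q => X q l) p := by
  set e : ℝ × ℝ := if i = 0 then ((1 : ℝ), (0 : ℝ)) else ((0 : ℝ), (1 : ℝ)) with he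
  have hcomp : fderiv ℝ (fun q => F (X q)) p = (fderiv ℝ F (X p)).comp (fderiv ℝ X p) :=
    fderiv_comp p hF hX
  have hXl : ∀ l, fderiv ℝ (fun q => X q l) p
      = (ContinuousLinearMap.proj l).comp (fderiv ℝ X p) := by
    intro l
    exact (((ContinuousLinearMap.proj l : ((Fin n → ℝ)) →L[ℝ] ℝ).hasFDerivAt).comp p
      hX.hasFDerivAt).fderiv
  have hv : fderiv ℝ X p e = ∑ l, (fderiv ℝ X p e l) • (Pi.single l 1 : Fin n → ℝ) := by
    ext j
    simp [Pi.single_apply]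
  unfold pd pdn
  rw [hcomp]
  simp only [ContinuousLinearMap.comp_apply, ← he]
  rw [hv, map_sum]
  refine Finset.sum_congr rfl fun l _ => ?_
  rw [(fderiv ℝ F (X p)).map_smul, hXl l]
  simp [mul_comm]

lemma pd_cont (i : Fin 2) (g : ℝ × ℝ → ℝ) (hg : ContDiff ℝ (⊤ : ℕ∞) g) :
    Continuous (pd i g) := by
  unfold pd
  exact (hg.continuous_fderiv (by simp)).clm_apply
    continuous_const

lemma hasDerivAt_fst (g : ℝ × ℝ → ℝ) (hg : ContDiff ℝ (⊤ : ℕ∞) g) (x y : ℝ) :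
    HasDerivAt (fun t => g (t, y)) (pd 0 g (x, y)) x := by
  have hd : HasFDerivAt g (fderiv ℝ g (x, y)) (x, y) :=
    (hg.differentiable (by simp) (x, y)).hasFDerivAt
  have hline : HasDerivAt (fun t : ℝ => (t, y)) ((1 : ℝ), (0 : ℝ)) x :=
    HasDerivAt.prodMk (hasDerivAt_id x) (hasDerivAt_const x y)
  have := hd.comp_hasDerivAt x hline
  simpa [pd, Function.comp_def] using this

lemma hasDerivAt_snd (g : ℝ × ℝ → ℝ) (hg : ContDiff ℝ (⊤ : ℕ∞) g) (x y : ℝ) :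
    HasDerivAt (fun t => g (x, t)) (pd 1 g (x, y)) y := by
  have hd : HasFDerivAt g (fderiv ℝ g (x, y)) (x, y) :=
    (hg.differentiable (by simp) (x, y)).hasFDerivAt
  have hline : HasDerivAt (fun t : ℝ => (x, t)) ((0 : ℝ), (1 : ℝ)) y :=
    HasDerivAt.prodMk (hasDerivAt_const y x) (hasDerivAt_id y)
  have := hd.comp_hasDerivAt y hline
  simpa [pd, Function.comp_def] using this

lemma ftc_line (h : ℝ → ℝ) (d : ℝ → ℝ) (hc : Continuous d)
    (hd : ∀ t, HasDerivAt h (d t) t) (hper : h 1 = h 0) :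
    ∫ t in Set.Icc (0:ℝ) 1, d t = 0 := by
  rw [MeasureTheory.integral_Icc_eq_integral_Ioc,
    ← intervalIntegral.integral_of_le (by norm_num : (0:ℝ) ≤ 1)]
  rw [intervalIntegral.integral_eq_sub_of_hasDerivAt (fun t _ => hd t)
    (hc.intervalIntegrable 0 1)]
  rw [hper]; ring

lemma div_snd (g : ℝ × ℝ → ℝ) (hg : ContDiff ℝ (⊤ : ℕ∞) g)
    (hper : ∀ (u : ℝ × ℝ) (k : ℤ × ℤ), g (u.1 + k.1, u.2 + k.2) = g u) :
    ∫ u in Set.Icc (0:ℝ) 1 ×ˢ Set.Icc (0:ℝ) 1, pd 1 g u = 0 := by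
  have hint : IntegrableOn (pd 1 g) (Set.Icc (0:ℝ) 1 ×ˢ Set.Icc (0:ℝ) 1) :=
    (pd_cont 1 g hg).continuousOn.integrableOn_compact (isCompact_Icc.prod isCompact_Icc)
  rw [Measure.volume_eq_prod] at hint ⊢
  rw [MeasureTheory.setIntegral_prod _ hint]
  have inner : ∀ x : ℝ, ∫ y in Set.Icc (0:ℝ) 1, pd 1 g (x, y) = 0 := by
    intro x
    refine ftc_line (fun t => g (x, t)) _ ?_ (fun t => hasDerivAt_snd g hg x t) ?_
    · exact (pd_cont 1 g hg).comp (continuous_const.prodMk continuous_id)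
    · have := hper (x, 0) (0, 1)
      simpa using this
  simp only [inner, integral_zero]

lemma div_fst (g : ℝ × ℝ → ℝ) (hg : ContDiff ℝ (⊤ : ℕ∞) g)
    (hper : ∀ (u : ℝ × ℝ) (k : ℤ × ℤ), g (u.1 + k.1, u.2 + k.2) = g u) :
    ∫ u in Set.Icc (0:ℝ) 1 ×ˢ Set.Icc (0:ℝ) 1, pd 0 g u = 0 := by
  have hint : IntegrableOn (pd 0 g) (Set.Icc (0:ℝ) 1 ×ˢ Set.Icc (0:ℝ) 1) :=
    (pd_cont 0 g hg).continuousOn.integrableOn_compact (isCompact_Icc.prod isCompact_Icc)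
  rw [Measure.volume_eq_prod] at hint ⊢
  rw [MeasureTheory.setIntegral_prod _ hint]
  have hswap : Integrable (Function.uncurry fun x y => pd 0 g (x, y))
      ((volume.restrict (Set.Icc (0:ℝ) 1)).prod (volume.restrict (Set.Icc (0:ℝ) 1))) := by
    rw [Measure.prod_restrict]
    exact hint
  rw [MeasureTheory.integral_integral_swap hswap]
  have inner : ∀ y : ℝ, ∫ x in Set.Icc (0:ℝ) 1, pd 0 g (x, y) = 0 := by
    intro y
    refine ftc_line (fun t => g (t, y)) _ ?_ (fun t => hasDerivAt_fst g hg t y) ?_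
    · exact (pd_cont 0 g hg).comp (continuous_id.prodMk continuous_const)
    · have := hper (0, y) (1, 0)
      simpa using this
  simp only [inner, integral_zero]

/-- For a ℤ²-periodic solution `(X,η)` of the Poisson sigma model on all of
ℝ² (a solution on the torus) and any smooth vector field `A`, the integral over the unit
square of the contraction of the Schouten bracket `[α,A]` with `η ∧ η` vanishes. -/
theorem stmt2 {n : ℕ} (hn : 1 ≤ n)
    (α : (Fin n → ℝ) → Fin n → Fin n → ℝ) (hα : ContDiff ℝ (⊤ : ℕ∞) α)
    (hskew : ∀ x μ ν, α x μ ν = - α x ν μ)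
    (X : ℝ × ℝ → Fin n → ℝ) (η : ℝ × ℝ → Fin n → Fin 2 → ℝ)
    (hX : ContDiff ℝ (⊤ : ℕ∞) X) (hη : ContDiff ℝ (⊤ : ℕ∞) η)
    (hXper : ∀ (u : ℝ × ℝ) (k : ℤ × ℤ), X (u.1 + k.1, u.2 + k.2) = X u)
    (hηper : ∀ (u : ℝ × ℝ) (k : ℤ × ℤ), η (u.1 + k.1, u.2 + k.2) = η u)
    (hE1 : ∀ (p : ℝ × ℝ), ∀ i : Fin 2, ∀ μ,
      pd i (fun q => X q μ) p + ∑ ν, α (X p) μ ν * η p ν i = 0)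
    (hE2 : ∀ (p : ℝ × ℝ), ∀ ρ,
      pd 0 (fun q => η q ρ 1) p - pd 1 (fun q => η q ρ 0) p
        + ∑ μ, ∑ ν, pdn ρ (fun x => α x μ ν) (X p) * η p μ 0 * η p ν 1 = 0)
    (A : (Fin n → ℝ) → Fin n → ℝ) (hA : ContDiff ℝ (⊤ : ℕ∞) A) :
    ∫ u in Set.Icc (0:ℝ) 1 ×ˢ Set.Icc (0:ℝ) 1,
      (∑ μ, ∑ ν, (∑ lam, (α (X u) lam ν * pdn lam (fun x => A x μ) (X u)
          - α (X u) lam μ * pdn lam (fun x => A x ν) (X u)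
          - A (X u) lam * pdn lam (fun x => α x μ ν) (X u)))
        * η u μ 0 * η u ν 1) = 0 := by
  have hle : ((1:ℕ∞) : WithTop ℕ∞) ≤ ((⊤:ℕ∞) : WithTop ℕ∞) := by
    exact_mod_cast (le_top : (1:ℕ∞) ≤ ⊤)
  have hAXμ : ∀ μ, ContDiff ℝ (⊤ : ℕ∞) (fun u => A (X u) μ) :=
    fun μ => contDiff_pi.mp (hA.comp hX) μ
  have hημi : ∀ μ i, ContDiff ℝ (⊤ : ℕ∞) (fun u => η u μ i) :=
    fun μ i => contDiff_pi.mp (contDiff_pi.mp hη μ) i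
  set g0 : ℝ × ℝ → ℝ := fun u => ∑ μ, A (X u) μ * η u μ 1 with hg0def
  set g1 : ℝ × ℝ → ℝ := fun u => ∑ μ, A (X u) μ * η u μ 0 with hg1def
  have hg0 : ContDiff ℝ (⊤ : ℕ∞) g0 :=
    ContDiff.sum fun μ _ => (hAXμ μ).mul (hημi μ 1)
  have hg1 : ContDiff ℝ (⊤ : ℕ∞) g1 :=
    ContDiff.sum fun μ _ => (hAXμ μ).mul (hημi μ 0)
  have hg0per : ∀ (u : ℝ × ℝ) (k : ℤ × ℤ), g0 (u.1 + k.1, u.2 + k.2) = g0 u := by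
    intro u k
    simp only [hg0def, hXper u k, hηper u k]
  have hg1per : ∀ (u : ℝ × ℝ) (k : ℤ × ℤ), g1 (u.1 + k.1, u.2 + k.2) = g1 u := by
    intro u k
    simp only [hg1def, hXper u k, hηper u k]
  have key : ∀ u : ℝ × ℝ,
      (∑ μ, ∑ ν, (∑ lam, (α (X u) lam ν * pdn lam (fun x => A x μ) (X u)
          - α (X u) lam μ * pdn lam (fun x => A x ν) (X u)
          - A (X u) lam * pdn lam (fun x => α x μ ν) (X u)))
        * η u μ 0 * η u ν 1) = pd 0 g0 u - pd 1 g1 u := by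
    intro u
    have dX : DifferentiableAt ℝ X u := (hX.differentiable (ENat.one_le_iff_ne_zero_withTop.mp hle)).differentiableAt
    have dA : ∀ μ, DifferentiableAt ℝ (fun x => A x μ) (X u) :=
      fun μ => ((contDiff_pi.mp hA μ).differentiable (ENat.one_le_iff_ne_zero_withTop.mp hle)).differentiableAt
    have dAX : ∀ μ, DifferentiableAt ℝ (fun q => A (X q) μ) u :=
      fun μ => ((hAXμ μ).differentiable (ENat.one_le_iff_ne_zero_withTop.mp hle)).differentiableAt
    have dη : ∀ μ i, DifferentiableAt ℝ (fun q => η q μ i) u :=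
      fun μ i => ((hημi μ i).differentiable (ENat.one_le_iff_ne_zero_withTop.mp hle)).differentiableAt
    have e1 : ∀ (i : Fin 2) (l : Fin n),
        pd i (fun q => X q l) u = -∑ ν, α (X u) l ν * η u ν i :=
      fun i l => eq_neg_of_add_eq_zero_left (hE1 u i l)
    have e2 : ∀ ρ, pd 0 (fun q => η q ρ 1) u
        = pd 1 (fun q => η q ρ 0) u
          - ∑ μ, ∑ ν, pdn ρ (fun x => α x μ ν) (X u) * η u μ 0 * η u ν 1 := by
      intro ρ
      have := hE2 u ρ
      linarith
    have hp0 : pd 0 g0 u = ∑ μ, ((∑ l, pdn l (fun x => A x μ) (X u)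
          * (-∑ ν, α (X u) l ν * η u ν 0)) * η u μ 1
        + A (X u) μ * (pd 1 (fun q => η q μ 0) u
          - ∑ μ', ∑ ν, pdn μ (fun x => α x μ' ν) (X u) * η u μ' 0 * η u ν 1)) := by
      rw [show pd 0 g0 u = pd 0 (fun q => ∑ μ, A (X q) μ * η q μ 1) u from rfl]
      rw [pd_sum 0 (fun μ q => A (X q) μ * η q μ 1) u (fun μ => (dAX μ).mul (dη μ 1))]
      refine Finset.sum_congr rfl fun μ _ => ?_
      rw [pd_mul 0 _ _ u (dAX μ) (dη μ 1), pd_comp 0 (fun x => A x μ) X u (dA μ) dX, e2 μ]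
      congr 2
      exact Finset.sum_congr rfl fun l _ => by rw [e1 0 l]
    have hp1 : pd 1 g1 u = ∑ μ, ((∑ l, pdn l (fun x => A x μ) (X u)
          * (-∑ ν, α (X u) l ν * η u ν 1)) * η u μ 0
        + A (X u) μ * pd 1 (fun q => η q μ 0) u) := by
      rw [show pd 1 g1 u = pd 1 (fun q => ∑ μ, A (X q) μ * η q μ 0) u from rfl]
      rw [pd_sum 1 (fun μ q => A (X q) μ * η q μ 0) u (fun μ => (dAX μ).mul (dη μ 0))]
      refine Finset.sum_congr rfl fun μ _ => ?_
      rw [pd_mul 1 _ _ u (dAX μ) (dη μ 0), pd_comp 1 (fun x => A x μ) X u (dA μ) dX]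
      congr 1
      congr 1
      exact Finset.sum_congr rfl fun l _ => by rw [e1 1 l]
    rw [hp0, hp1]
    exact alg (fun l ν => α (X u) l ν) (fun l μ => pdn l (fun x => A x μ) (X u))
      (fun l => A (X u) l) (fun l μ ν => pdn l (fun x => α x μ ν) (X u))
      (fun μ => η u μ 0) (fun ν => η u ν 1) (fun ρ => pd 1 (fun q => η q ρ 0) u)
  have hint0 : IntegrableOn (pd 0 g0) (Set.Icc (0:ℝ) 1 ×ˢ Set.Icc (0:ℝ) 1) :=
    (pd_cont 0 g0 hg0).continuousOn.integrableOn_compact (isCompact_Icc.prod isCompact_Icc)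
  have hint1 : IntegrableOn (pd 1 g1) (Set.Icc (0:ℝ) 1 ×ˢ Set.Icc (0:ℝ) 1) :=
    (pd_cont 1 g1 hg1).continuousOn.integrableOn_compact (isCompact_Icc.prod isCompact_Icc)
  calc ∫ u in Set.Icc (0:ℝ) 1 ×ˢ Set.Icc (0:ℝ) 1,
      (∑ μ, ∑ ν, (∑ lam, (α (X u) lam ν * pdn lam (fun x => A x μ) (X u)
          - α (X u) lam μ * pdn lam (fun x => A x ν) (X u)
          - A (X u) lam * pdn lam (fun x => α x μ ν) (X u)))
        * η u μ 0 * η u ν 1)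
      = ∫ u in Set.Icc (0:ℝ) 1 ×ˢ Set.Icc (0:ℝ) 1, (pd 0 g0 u - pd 1 g1 u) :=
        integral_congr_ae (Filter.Eventually.of_forall fun u => key u)
    _ = (∫ u in Set.Icc (0:ℝ) 1 ×ˢ Set.Icc (0:ℝ) 1, pd 0 g0 u)
        - ∫ u in Set.Icc (0:ℝ) 1 ×ˢ Set.Icc (0:ℝ) 1, pd 1 g1 u :=
        integral_sub hint0 hint1
    _ = 0 := by rw [div_fst g0 hg0 hg0per, div_snd g1 hg1 hg1per, sub_self]
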